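/- arXiv:1712.09283 — 3 statements merged into one kernel-verified Lean document; each statement's English description precedes it below -/
import Mathlib

section
/- Let V = 𝔻³ × [0,1] ⊂ ℝ³ × ℝ = ℝ⁴ with coordinates (p,t), let X: V → ℝ³ be smooth and nowhere vanishing, and let D = span{∂t, X̃}. Fix a point (p,t) at which X(p,t) and ∂ₜX(p,t) are linearly independent, so that E = span{∂t, X̃, [∂t,X̃]} is a 3-plane field near (p,t). Then D is Engel at (p,t) — that is, there exist smooth local sections Z₁, Z₂ of E with [Z₁,Z₂](p,t) ∉ E(p,t) — if and only if at least one of the following holds: (A) det(X(p,t), ∂ₜX(p,t), ∂ₜ²X(p,t)) ≠ 0, i.e. the projectivized curve X_p has no inflection point at time t; or (B) the spatial Lie bracket of the vector fields X(·,t) and ∂ₜX(·,t) on the slice 𝔻³ × {t}, evaluated at p, does not lie in span{X(p,t), ∂ₜX(p,t)}, i.e. the plane field ⟨X, ∂ₜX⟩ on the slice is a contact structure at p. -/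
/-!
Shared Engel infrastructure (see below for the statement).
and the 2-plane field `D = span{∂t, X̃}`:
(i) the bracket of any two smooth local sections of `D` at a point `(p,t)` lies in
    `span{∂t, X̃, [∂t,X̃]}(p,t)`;
(ii) `D` is non-integrable at `(p,t)` iff `X(p,t)` and `∂ₜX(p,t)` are linearly independent.
-/

noncomputable section

open Set

/-- `ℝ³`. -/
abbrev R3 : Type := Fin 3 → ℝ

/-- `ℝ⁴ = ℝ³ × ℝ`, with coordinates `(p, t)`. -/
abbrev R4 : Type := R3 × ℝ

/-- The Lie bracket `[V, W]` of two vector fields on a real normed space. -/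
def lieB {E : Type*} [NormedAddCommGroup E] [NormedSpace ℝ E] (V W : E → E) : E → E :=
  fun q => fderiv ℝ W q (V q) - fderiv ℝ V q (W q)

/-- `V` is a smooth local section of the plane field `P` near the point `q`. -/
def IsLocalSectionAt {E : Type*} [NormedAddCommGroup E] [NormedSpace ℝ E]
    (P : E → Submodule ℝ E) (V : E → E) (q : E) : Prop :=
  ∃ s : Set E, IsOpen s ∧ q ∈ s ∧ ContDiffOn ℝ (⊤ : ℕ∞) V s ∧ ∀ x ∈ s, V x ∈ P x

/-- The plane field `P` is (maximally) non-integrable at `q`: some two smooth local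
sections of `P` have a bracket at `q` that escapes `P q`. -/
def MaxNonIntegrableAt {E : Type*} [NormedAddCommGroup E] [NormedSpace ℝ E]
    (P : E → Submodule ℝ E) (q : E) : Prop :=
  ∃ V₁ V₂ : E → E, IsLocalSectionAt P V₁ q ∧ IsLocalSectionAt P V₂ q ∧ lieB V₁ V₂ q ∉ P q

/-- The coordinate vector field `∂t` on `ℝ³ × ℝ`. -/
def dtF : R4 → R4 := fun _ => (0, 1)

/-- The horizontal lift `X̃(p,t) = (X(p,t), 0)`. -/
def Xtil (X : R4 → R3) : R4 → R4 := fun q => (X q, 0)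

/-- The 2-plane field `D = span{∂t, X̃}`. -/
def Dpf (X : R4 → R3) : R4 → Submodule ℝ R4 :=
  fun q => Submodule.span ℝ {dtF q, Xtil X q}

/-- The 3-plane field `E = span{∂t, X̃, [∂t, X̃]}`. -/
def Epf (X : R4 → R3) : R4 → Submodule ℝ R4 :=
  fun q => Submodule.span ℝ {dtF q, Xtil X q, lieB dtF (Xtil X) q}

/-- The partial derivative `∂ₜX(p,t)` of `X` in the `t`-direction. -/
def pT (X : R4 → R3) : R4 → R3 := fun q => deriv (fun s => X (q.1, s)) q.2

/-- The closed Euclidean unit ball `𝔻³ ⊆ ℝ³`. -/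
def D3 : Set R3 := {p | ∑ i, p i ^ 2 ≤ 1}

/-- `V = 𝔻³ × [0,1] ⊆ ℝ⁴`. -/
def VSet : Set R4 := D3 ×ˢ Icc (0 : ℝ) 1


/-- `∂ₜ²X(p,t)`, the second `t`-derivative of `X`. -/
def pT2 (X : R4 → R3) : R4 → R3 := fun q => deriv (fun s => pT X (q.1, s)) q.2

/-!
Statement 1: with `q = (p,t) ∈ 𝔻³ × [0,1]` a point where `X(p,t)` and `∂ₜX(p,t)` are
linearly independent, `D = span{∂t, X̃}` is Engel at `q` (i.e. the 3-plane field
`E = span{∂t, X̃, [∂t,X̃]}` is maximally non-integrable at `q`) iff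
(A) `det(X, ∂ₜX, ∂ₜ²X)(q) ≠ 0`, or
(B) the spatial bracket of the slice vector fields `X(·,t)` and `∂ₜX(·,t)` at `p` does not
    lie in `span{X(p,t), ∂ₜX(p,t)}`.
-/


/-- The determinant of the 3×3 matrix with rows `a`, `b`, `c`. -/
def G (a b c : R3) : ℝ := Matrix.det (Matrix.of ![a, b, c])

theorem G_eq (a b c : R3) : G a b c =
    a 0 * b 1 * c 2 - a 0 * b 2 * c 1 - a 1 * b 0 * c 2 + a 1 * b 2 * c 0
      + a 2 * b 0 * c 1 - a 2 * b 1 * c 0 := by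
  simp [G, Matrix.det_fin_three]

theorem G_cyc (a b c : R3) : G a b c = Matrix.det (Matrix.of ![c, a, b]) := by
  simp only [G_eq, Matrix.det_fin_three, Matrix.of_apply, Matrix.cons_val', Matrix.cons_val_zero,
    Matrix.cons_val_one, Matrix.head_cons, Matrix.empty_val', Matrix.cons_val_fin_one,
    Matrix.head_fin_const, Matrix.cons_val_two, Matrix.tail_cons]
  ring

theorem G_sub3 (a b x y : R3) : G a b (x - y) = G a b x - G a b y := by
  simp only [G_eq, Pi.sub_apply]; ring

theorem L1 {a b : R3} (hab : LinearIndependent ℝ ![a, b]) (c : R3) :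
    G a b c = 0 ↔ c ∈ Submodule.span ℝ {a, b} := by
  constructor
  · intro h
    by_contra hc
    have hind : LinearIndependent ℝ ![c, a, b] := by
      rw [show (![c, a, b] : Fin 3 → R3) = Fin.cons c ![a, b] from rfl,
        linearIndependent_fin_cons]
      refine ⟨hab, ?_⟩
      rw [show Set.range ![a, b] = {a, b} by
        simp [Matrix.range_cons, Matrix.range_empty]; rw [Set.pair_comm]]
      exact hc
    have hunit : IsUnit (Matrix.of ![c, a, b]) :=
      Matrix.linearIndependent_rows_iff_isUnit.mp hind
    have hdet : Matrix.det (Matrix.of ![c, a, b]) ≠ 0 := by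
      have := (Matrix.isUnit_iff_isUnit_det _).mp hunit
      simpa [isUnit_iff_ne_zero] using this
    exact hdet (by rw [← G_cyc]; exact h)
  · intro h
    obtain ⟨x, y, rfl⟩ := Submodule.mem_span_pair.mp h
    simp only [G_eq, Pi.add_apply, Pi.smul_apply, smul_eq_mul]
    ring

theorem hasDerivAt_G {f g h : ℝ → R3} {a' b' c' : R3} {s : ℝ}
    (hf : HasDerivAt f a' s) (hg : HasDerivAt g b' s) (hh : HasDerivAt h c' s) :
    HasDerivAt (fun u => G (f u) (g u) (h u))
      (G a' (g s) (h s) + G (f s) b' (h s) + G (f s) (g s) c') s := by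
  have F : ∀ i, HasDerivAt (fun u => f u i) (a' i) s := hasDerivAt_pi.1 hf
  have Gg : ∀ i, HasDerivAt (fun u => g u i) (b' i) s := hasDerivAt_pi.1 hg
  have H : ∀ i, HasDerivAt (fun u => h u i) (c' i) s := hasDerivAt_pi.1 hh
  have big := (((((((F 0).mul (Gg 1)).mul (H 2)).sub
      (((F 0).mul (Gg 2)).mul (H 1))).sub
      (((F 1).mul (Gg 0)).mul (H 2))).add
      (((F 1).mul (Gg 2)).mul (H 0))).add
      (((F 2).mul (Gg 0)).mul (H 1))).sub
      (((F 2).mul (Gg 1)).mul (H 0))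
  refine (big.congr_deriv ?_).congr_of_eventuallyEq (Filter.Eventually.of_forall fun u => ?_)
  · simp only [G_eq, Pi.mul_apply]; ring
  · beta_reduce; rw [G_eq]; rfl

/-- The annihilator of `span {(0,1),(a,0),(b,0)}` as a linear functional. -/
def phiAB (a b : R3) : R4 →ₗ[ℝ] ℝ where
  toFun v := G a b v.1
  map_add' u v := by simp only [Prod.fst_add, G_eq, Pi.add_apply]; ring
  map_smul' r v := by simp only [Prod.smul_fst, G_eq, Pi.smul_apply, smul_eq_mul,
    RingHom.id_apply]; ring

theorem G_ker (a b : R3) (v : R4)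
    (h : v ∈ Submodule.span ℝ {(((0 : R3), (1 : ℝ)) : R4), ((a, 0) : R4), ((b, 0) : R4)}) :
    G a b v.1 = 0 := by
  have hle : Submodule.span ℝ {(((0 : R3), (1 : ℝ)) : R4), ((a, 0) : R4), ((b, 0) : R4)} ≤
      LinearMap.ker (phiAB a b) := by
    rw [Submodule.span_le]
    intro x hx
    simp only [Set.mem_insert_iff, Set.mem_singleton_iff] at hx
    rcases hx with rfl | rfl | rfl <;>
      · simp only [SetLike.mem_coe, LinearMap.mem_ker, phiAB, LinearMap.coe_mk, AddHom.coe_mk,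
          G_eq, Pi.zero_apply]
        ring
  simpa [phiAB] using hle h

theorem pT_eq_fderiv (f : R4 → R3) (x : R4) (hf : DifferentiableAt ℝ f x) :
    pT f x = fderiv ℝ f x ((0 : R3), (1 : ℝ)) := by
  have hline : HasDerivAt (fun s : ℝ => ((x.1, s) : R4)) ((0 : R3), (1 : ℝ)) x.2 :=
    (hasDerivAt_const x.2 x.1).prodMk (hasDerivAt_id x.2)
  exact (hf.hasFDerivAt.comp_hasDerivAt x.2 hline).deriv

theorem hasFDerivAt_Xtil (f : R4 → R3) (x : R4) (hf : DifferentiableAt ℝ f x) :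
    HasFDerivAt (Xtil f) ((fderiv ℝ f x).prod 0) x :=
  hf.hasFDerivAt.prodMk (hasFDerivAt_const 0 x)

theorem lieB_dtF (f : R4 → R3) (x : R4) (hf : DifferentiableAt ℝ f x) :
    lieB dtF (Xtil f) x = Xtil (pT f) x := by
  have h1 : fderiv ℝ (Xtil f) x = (fderiv ℝ f x).prod 0 := (hasFDerivAt_Xtil f x hf).fderiv
  have h2 : fderiv ℝ dtF x = 0 := fderiv_const_apply _
  simp only [lieB, h1, h2, ContinuousLinearMap.zero_apply, sub_zero, dtF,
    ContinuousLinearMap.prod_apply, ContinuousLinearMap.zero_apply, Xtil,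
    pT_eq_fderiv f x hf]

theorem Epf_eq (X : R4 → R3) (x : R4) (hd : DifferentiableAt ℝ X x) :
    Epf X x = Submodule.span ℝ {(((0 : R3), (1 : ℝ)) : R4), ((X x, 0) : R4), ((pT X x, 0) : R4)} := by
  unfold Epf
  rw [lieB_dtF X x hd]
  rfl

theorem keyalg (DX DY : R4 →L[ℝ] R3) (a b : R3) (c₁ c₂ c₃ d₁ d₂ d₃ : ℝ) (v w : R4)
    (hv : v = c₁ • (((0 : R3), (1 : ℝ)) : R4) + (c₂ • ((a, 0) : R4) + c₃ • ((b, 0) : R4)))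
    (hw : w = d₁ • (((0 : R3), (1 : ℝ)) : R4) + (d₂ • ((a, 0) : R4) + d₃ • ((b, 0) : R4)))
    (hb : DX ((0 : R3), (1 : ℝ)) = b) :
    G (DX w) b v.1 + G a (DY w) v.1 - G (DX v) b w.1 - G a (DY v) w.1
      = (c₂ * d₃ - c₃ * d₂) * G a b (DY ((a, 0) : R4) - DX ((b, 0) : R4))
        + (c₁ * d₃ - c₃ * d₁) * G a b (DY (((0 : R3), (1 : ℝ)) : R4)) := by
  subst hv hw
  simp only [map_add, map_smul, hb, Prod.fst_add, Prod.smul_fst, smul_zero, zero_add,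
    G_eq, Pi.add_apply, Pi.smul_apply, Pi.sub_apply, smul_eq_mul]
  ring


theorem statement_1
    (U : Set R4) (hU : IsOpen U) (hVU : VSet ⊆ U)
    (X : R4 → R3) (hX : ContDiffOn ℝ (⊤ : ℕ∞) X U) (hX0 : ∀ q ∈ U, X q ≠ 0)
    (q : R4) (hq : q ∈ VSet)
    (hInd : LinearIndependent ℝ ![X q, pT X q]) :
    MaxNonIntegrableAt (Epf X) q ↔
      ((Matrix.of ![X q, pT X q, pT2 X q]).det ≠ 0 ∨
        lieB (fun p => X (p, q.2)) (fun p => pT X (p, q.2)) q.1 ∉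
          Submodule.span ℝ {X q, pT X q}) := by
  have hqU : q ∈ U := hVU hq
  set a := X q with ha
  set b := pT X q with hb
  have hXd : ∀ x ∈ U, DifferentiableAt ℝ X x := fun x hx =>
    (hX.contDiffAt (hU.mem_nhds hx)).differentiableAt (by simp)
  have hYsm : ContDiffOn ℝ (⊤ : ℕ∞) (pT X) U := by
    have h1 : ContDiffOn ℝ (⊤ : ℕ∞) (fun x => fderiv ℝ X x) U :=
      hX.fderiv_of_isOpen hU (by simp)
    have h2 : ContDiffOn ℝ (⊤ : ℕ∞) (fun x => fderiv ℝ X x (((0 : R3), (1 : ℝ)) : R4)) U :=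
      h1.clm_apply contDiffOn_const
    exact h2.congr fun x hx => pT_eq_fderiv X x (hXd x hx)
  have hYd : DifferentiableAt ℝ (pT X) q :=
    (hYsm.contDiffAt (hU.mem_nhds hqU)).differentiableAt (by simp)
  set DX := fderiv ℝ X q with hDX
  set DY := fderiv ℝ (pT X) q with hDY
  have hDXe1 : DX (((0 : R3), (1 : ℝ)) : R4) = b := (pT_eq_fderiv X q (hXd q hqU)).symm
  have hDYe1 : DY (((0 : R3), (1 : ℝ)) : R4) = pT2 X q := (pT_eq_fderiv (pT X) q hYd).symm
  have espan : Epf X q =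
      Submodule.span ℝ {(((0 : R3), (1 : ℝ)) : R4), ((a, 0) : R4), ((b, 0) : R4)} :=
    Epf_eq X q (hXd q hqU)
  have memE : ∀ v : R4, v ∈ Epf X q ↔ G a b v.1 = 0 := by
    intro v
    rw [espan]
    constructor
    · exact G_ker a b v
    · intro h0
      obtain ⟨x, y, hxy⟩ := Submodule.mem_span_pair.mp ((L1 hInd v.1).mp h0)
      have hv : v = v.2 • (((0 : R3), (1 : ℝ)) : R4) + (x • ((a, 0) : R4) + y • ((b, 0) : R4)) := by
        rw [Prod.ext_iff]
        constructor
        · simp only [Prod.fst_add, Prod.smul_fst, smul_zero, zero_add]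
          exact hxy.symm
        · simp only [Prod.snd_add, Prod.smul_snd, smul_zero, add_zero, smul_eq_mul, mul_one,
            mul_zero, zero_add]
      rw [hv]
      refine Submodule.add_mem _ (Submodule.smul_mem _ _ (Submodule.subset_span ?_))
        (Submodule.add_mem _ (Submodule.smul_mem _ _ (Submodule.subset_span ?_))
          (Submodule.smul_mem _ _ (Submodule.subset_span ?_))) <;> simp
  have hslice : lieB (fun p => X (p, q.2)) (fun p => pT X (p, q.2)) q.1
      = DY ((a, 0) : R4) - DX ((b, 0) : R4) := by
    have hι : HasFDerivAt (fun p : R3 => ((p, q.2) : R4))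
        ((ContinuousLinearMap.id ℝ R3).prod 0) q.1 :=
      (hasFDerivAt_id q.1).prodMk (hasFDerivAt_const q.2 q.1)
    have h1 : HasFDerivAt (fun p : R3 => X (p, q.2))
        (DX.comp ((ContinuousLinearMap.id ℝ R3).prod 0)) q.1 :=
      (hXd q hqU).hasFDerivAt.comp q.1 hι
    have h2 : HasFDerivAt (fun p : R3 => pT X (p, q.2))
        (DY.comp ((ContinuousLinearMap.id ℝ R3).prod 0)) q.1 :=
      by have := hYd.hasFDerivAt.comp q.1 hι; exact this
    simp only [lieB, h1.fderiv, h2.fderiv, ContinuousLinearMap.comp_apply,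
      ContinuousLinearMap.prod_apply, ContinuousLinearMap.id_apply,
      ContinuousLinearMap.zero_apply]
    rfl
  have hdet_eq : (Matrix.of ![a, b, pT2 X q]).det = G a b (pT2 X q) := rfl
  constructor
  · -- forward direction
    rintro ⟨V, W, hV, hW, hbr⟩
    obtain ⟨sV, hsV, hqsV, hVsm, hVmem⟩ := hV
    obtain ⟨sW, hsW, hqsW, hWsm, hWmem⟩ := hW
    have hVd : DifferentiableAt ℝ V q :=
      (hVsm.contDiffAt (hsV.mem_nhds hqsV)).differentiableAt (by simp)
    have hWd : DifferentiableAt ℝ W q :=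
      (hWsm.contDiffAt (hsW.mem_nhds hqsW)).differentiableAt (by simp)
    have key : ∀ (Z : R4 → R4) (sZ : Set R4), IsOpen sZ → q ∈ sZ →
        (∀ x ∈ sZ, Z x ∈ Epf X x) → DifferentiableAt ℝ Z q → ∀ v : R4,
        G (DX v) b ((Z q).1) + G a (DY v) ((Z q).1) + G a b ((fderiv ℝ Z q v).1) = 0 := by
      intro Z sZ hsZ hqsZ hZmem hZd v
      have hvan : ∀ x ∈ sZ ∩ U, G (X x) (pT X x) ((Z x).1) = 0 := by
        intro x hx
        exact G_ker (X x) (pT X x) (Z x) ((Epf_eq X x (hXd x hx.2)) ▸ hZmem x hx.1)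
      have hγ : HasDerivAt (fun u : ℝ => q + u • v) v 0 := by
        simpa using ((hasDerivAt_id (0 : ℝ)).smul_const v).const_add q
      have hq0 : q + (0 : ℝ) • v = q := by simp
      have hX1 : HasDerivAt (fun u : ℝ => X (q + u • v)) (DX v) 0 :=
        (hXd q hqU).hasFDerivAt.comp_hasDerivAt_of_eq 0 hγ hq0.symm
      have hY1 : HasDerivAt (fun u : ℝ => pT X (q + u • v)) (DY v) 0 :=
        hYd.hasFDerivAt.comp_hasDerivAt_of_eq 0 hγ hq0.symm
      have hZ1 : HasDerivAt (fun u : ℝ => Z (q + u • v)) (fderiv ℝ Z q v) 0 :=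
        hZd.hasFDerivAt.comp_hasDerivAt_of_eq 0 hγ hq0.symm
      have hZf : HasDerivAt (fun u : ℝ => (Z (q + u • v)).1) ((fderiv ℝ Z q v).1) 0 :=
        (ContinuousLinearMap.fst ℝ R3 ℝ).hasFDerivAt.comp_hasDerivAt 0 hZ1
      have hbig := hasDerivAt_G hX1 hY1 hZf
      rw [hq0] at hbig
      have hzero : HasDerivAt (fun u : ℝ => G (X (q + u • v)) (pT X (q + u • v))
          ((Z (q + u • v)).1)) 0 0 := by
        refine (hasDerivAt_const (0 : ℝ) (0 : ℝ)).congr_of_eventuallyEq ?_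
        have hcont : ContinuousAt (fun u : ℝ => q + u • v) 0 := by fun_prop
        have hnb : ∀ᶠ u in nhds (0 : ℝ), q + u • v ∈ sZ ∩ U := by
          refine hcont.preimage_mem_nhds (((hsZ.inter hU).mem_nhds ?_))
          rw [hq0]; exact Set.mem_inter hqsZ hqU
        filter_upwards [hnb] with u hu
        exact hvan _ hu
      have huniq := hbig.unique hzero
      linarith [huniq]
    have hVq : V q ∈ Epf X q := hVmem q hqsV
    have hWq : W q ∈ Epf X q := hWmem q hqsW
    rw [espan] at hVq hWq
    obtain ⟨c₁, zV, hzV, hVq'⟩ := Submodule.mem_span_insert.mp hVq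
    obtain ⟨c₂, c₃, hzV'⟩ := Submodule.mem_span_pair.mp hzV
    obtain ⟨d₁, zW, hzW, hWq'⟩ := Submodule.mem_span_insert.mp hWq
    obtain ⟨d₂, d₃, hzW'⟩ := Submodule.mem_span_pair.mp hzW
    rw [← hzV'] at hVq'
    rw [← hzW'] at hWq'
    have hIW := key W sW hsW hqsW hWmem hWd (V q)
    have hIV := key V sV hsV hqsV hVmem hVd (W q)
    have hne : G a b ((lieB V W q).1) ≠ 0 := by
      intro h
      exact hbr ((memE _).mpr h)
    have hlie : (lieB V W q).1 = (fderiv ℝ W q (V q)).1 - (fderiv ℝ V q (W q)).1 := rfl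
    have hval : G a b ((lieB V W q).1)
        = G (DX (W q)) b (V q).1 + G a (DY (W q)) (V q).1
          - G (DX (V q)) b (W q).1 - G a (DY (V q)) (W q).1 := by
      rw [hlie, G_sub3]
      have e1 : G a b ((fderiv ℝ W q (V q)).1)
          = -(G (DX (V q)) b ((W q).1) + G a (DY (V q)) ((W q).1)) := by linarith [hIW]
      have e2 : G a b ((fderiv ℝ V q (W q)).1)
          = -(G (DX (W q)) b ((V q).1) + G a (DY (W q)) ((V q).1)) := by linarith [hIV]
      rw [e1, e2]; ring
    rw [keyalg DX DY a b c₁ c₂ c₃ d₁ d₂ d₃ (V q) (W q) hVq' hWq' hDXe1] at hval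
    rw [hval] at hne
    by_contra hcon
    push_neg at hcon
    obtain ⟨hA, hB⟩ := hcon
    have hAz : G a b (DY (((0 : R3), (1 : ℝ)) : R4)) = 0 := by
      rw [hDYe1, ← hdet_eq]; exact hA
    have hBz : G a b (DY ((a, 0) : R4) - DX ((b, 0) : R4)) = 0 := by
      rw [← hslice]; exact (L1 hInd _).mpr hB
    apply hne
    rw [hAz, hBz]
    ring
  · rintro (hA | hB)
    · refine ⟨dtF, Xtil (pT X), ?_, ?_, ?_⟩
      · exact ⟨Set.univ, isOpen_univ, trivial, contDiffOn_const,
          fun x _ => Submodule.subset_span (by simp)⟩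
      · exact ⟨U, hU, hqU, hYsm.prodMk contDiffOn_const, fun x hx => by
          rw [← lieB_dtF X x (hXd x hx)]
          exact Submodule.subset_span (by simp)⟩
      · have hcalc : lieB dtF (Xtil (pT X)) q = Xtil (pT (pT X)) q := lieB_dtF (pT X) q hYd
        rw [hcalc]
        rw [memE]
        have : pT (pT X) q = pT2 X q := rfl
        rw [show (Xtil (pT (pT X)) q).1 = pT2 X q from rfl]
        rw [hdet_eq] at hA
        exact hA
    · refine ⟨Xtil X, Xtil (pT X), ?_, ?_, ?_⟩
      · exact ⟨U, hU, hqU, hX.prodMk contDiffOn_const,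
          fun x _ => Submodule.subset_span (by simp)⟩
      · exact ⟨U, hU, hqU, hYsm.prodMk contDiffOn_const, fun x hx => by
          rw [← lieB_dtF X x (hXd x hx)]
          exact Submodule.subset_span (by simp)⟩
      · have h1 : fderiv ℝ (Xtil (pT X)) q = DY.prod 0 := (hasFDerivAt_Xtil (pT X) q hYd).fderiv
        have h2 : fderiv ℝ (Xtil X) q = DX.prod 0 := (hasFDerivAt_Xtil X q (hXd q hqU)).fderiv
        have hcalc : lieB (Xtil X) (Xtil (pT X)) q
            = ((DY ((a, 0) : R4) - DX ((b, 0) : R4), 0) : R4) := by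
          simp only [lieB, h1, h2, Xtil, ContinuousLinearMap.prod_apply,
            ContinuousLinearMap.zero_apply, Prod.mk_sub_mk, sub_zero]
          rfl
        rw [hcalc, memE, ← hslice]
        intro h0
        exact hB ((L1 hInd _).mp h0)

end
end

section
/- Let U ⊆ ℝ³ be open and let v₁, v₂ be smooth vector fields on U that are linearly independent at every point, spanning the plane field ξ = span{v₁, v₂}. On U × ℝ with coordinates (p,t), set X(p,t) = cos(t)·v₁(p) + sin(t)·v₂(p) and let D = span{∂t, X̃} be the associated 2-plane field (the trivialized Cartan prolongation of ξ). Then for every (p,t) ∈ U × ℝ, the distribution D is Engel at (p,t) if and only if [v₁,v₂](p) ∉ ξ(p), i.e. if and only if ξ is a contact structure at p. -/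
/-!
Shared Engel infrastructure (see below for the statement).
and the 2-plane field `D = span{∂t, X̃}`:
(i) the bracket of any two smooth local sections of `D` at a point `(p,t)` lies in
    `span{∂t, X̃, [∂t,X̃]}(p,t)`;
(ii) `D` is non-integrable at `(p,t)` iff `X(p,t)` and `∂ₜX(p,t)` are linearly independent.
-/

noncomputable section

open Set

/-- `D = span{∂t, X̃}` is Engel at `q`: `X(q)` and `∂ₜX(q)` are linearly independent, and the
3-plane field `E = span{∂t, X̃, [∂t,X̃]}` is maximally non-integrable at `q`. -/
def EngelAt (X : R4 → R3) (q : R4) : Prop :=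
  LinearIndependent ℝ ![X q, pT X q] ∧ MaxNonIntegrableAt (Epf X) q

/-! ### Auxiliary facts -/

open Matrix Module

/-- dot with a fixed vector, as a linear map. -/
def dlm (c : R3) : R3 →ₗ[ℝ] ℝ where
  toFun w := c ⬝ᵥ w
  map_add' x y := dotProduct_add c x y
  map_smul' r x := by simp [dotProduct_smul]

/-- dot with a fixed vector, as a continuous linear map. -/
def dl (c : R3) : R3 →L[ℝ] ℝ := LinearMap.toContinuousLinearMap (dlm c)

@[simp] lemma dl_apply (c w : R3) : dl c w = c ⬝ᵥ w := rfl

lemma hasFDerivAt_dot {E : Type*} [NormedAddCommGroup E] [NormedSpace ℝ E]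
    {f g : E → R3} {f' g' : E →L[ℝ] R3} {x : E}
    (hf : HasFDerivAt f f' x) (hg : HasFDerivAt g g' x) :
    HasFDerivAt (fun y => f y ⬝ᵥ g y) ((dl (g x)).comp f' + (dl (f x)).comp g') x := by
  have h : HasFDerivAt (fun y => ∑ i : Fin 3, f y i * g y i)
      (∑ i : Fin 3, (f x i • ((ContinuousLinearMap.proj i).comp g')
        + g x i • ((ContinuousLinearMap.proj i).comp f'))) x := by
    apply HasFDerivAt.fun_sum
    intro i _
    exact (((ContinuousLinearMap.proj i : R3 →L[ℝ] ℝ).hasFDerivAt).comp x hf).mul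
      (((ContinuousLinearMap.proj i : R3 →L[ℝ] ℝ).hasFDerivAt).comp x hg)
  have hfun : (fun y => f y ⬝ᵥ g y) = fun y => ∑ i : Fin 3, f y i * g y i := by
    funext y; simp [dotProduct]
  rw [hfun]
  convert h using 1
  ext u
  simp [dotProduct, Finset.sum_add_distrib, mul_comm]
  ring

lemma span_dot_cross {a b w : R3} (hw : w ∈ Submodule.span ℝ {a, b}) :
    a ⨯₃ b ⬝ᵥ w = 0 := by
  rcases Submodule.mem_span_pair.1 hw with ⟨c, d, rfl⟩
  have ha : a ⨯₃ b ⬝ᵥ a = 0 := by rw [dotProduct_comm]; simp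
  have hb : a ⨯₃ b ⬝ᵥ b = 0 := by rw [dotProduct_comm]; simp
  rw [dotProduct_add, dotProduct_smul, dotProduct_smul, ha, hb]
  simp

lemma cross_ne_zero {a b : R3} (h : LinearIndependent ℝ ![a, b]) : a ⨯₃ b ≠ 0 := by
  intro h0
  have e0 := congrFun h0 0
  have e1 := congrFun h0 1
  have e2 := congrFun h0 2
  simp [cross_apply] at e0 e1 e2
  have comp : ∀ i : Fin 3, (-(a ⬝ᵥ b)) * a i + (a ⬝ᵥ a) * b i = 0 := by
    intro i
    fin_cases i
    · show (-(a ⬝ᵥ b)) * a 0 + (a ⬝ᵥ a) * b 0 = 0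
      simp only [dotProduct, Fin.sum_univ_three]
      linear_combination (-(a 1)) * e2 + a 2 * e1
    · show (-(a ⬝ᵥ b)) * a 1 + (a ⬝ᵥ a) * b 1 = 0
      simp only [dotProduct, Fin.sum_univ_three]
      linear_combination a 0 * e2 + (-(a 2)) * e0
    · show (-(a ⬝ᵥ b)) * a 2 + (a ⬝ᵥ a) * b 2 = 0
      simp only [dotProduct, Fin.sum_univ_three]
      linear_combination (-(a 0)) * e1 + a 1 * e0
  have key : (-(a ⬝ᵥ b)) • a + (a ⬝ᵥ a) • b = 0 := by
    funext i
    simpa using comp i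
  have h2 := (LinearIndependent.pair_iff.1 h _ _ key).2
  have ha : a = 0 := dotProduct_self_eq_zero.1 h2
  have := (LinearIndependent.pair_iff.1 h 1 0 (by simp [ha])).1
  norm_num at this

lemma dot_cross_eq_zero_iff {a b : R3} (h : LinearIndependent ℝ ![a, b]) (w : R3) :
    a ⨯₃ b ⬝ᵥ w = 0 ↔ w ∈ Submodule.span ℝ {a, b} := by
  have hn : a ⨯₃ b ≠ 0 := cross_ne_zero h
  set ℓ : R3 →ₗ[ℝ] ℝ := dlm (a ⨯₃ b) with hℓ
  have hle : Submodule.span ℝ {a, b} ≤ LinearMap.ker ℓ := by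
    rw [Submodule.span_le]
    have ha : ℓ a = 0 := by
      show a ⨯₃ b ⬝ᵥ a = 0
      rw [dotProduct_comm]; simp
    have hb : ℓ b = 0 := by
      show a ⨯₃ b ⬝ᵥ b = 0
      rw [dotProduct_comm]; simp
    rintro x (rfl | rfl)
    · exact LinearMap.mem_ker.2 ha
    · exact LinearMap.mem_ker.2 hb
  have hsurj : Function.Surjective ℓ := by
    intro r
    refine ⟨(r / ((a ⨯₃ b) ⬝ᵥ (a ⨯₃ b))) • (a ⨯₃ b), ?_⟩
    have hz : (a ⨯₃ b) ⬝ᵥ (a ⨯₃ b) ≠ 0 := fun hz => hn (dotProduct_self_eq_zero.1 hz)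
    rw [LinearMap.map_smul]
    show (r / ((a ⨯₃ b) ⬝ᵥ (a ⨯₃ b))) • ((a ⨯₃ b) ⬝ᵥ (a ⨯₃ b)) = r
    rw [smul_eq_mul]
    exact div_mul_cancel₀ r hz
  have hrange : finrank ℝ (LinearMap.range ℓ) = 1 := by
    rw [LinearMap.range_eq_top.2 hsurj]
    simp
  have htot := LinearMap.finrank_range_add_finrank_ker ℓ
  rw [hrange, Module.finrank_fin_fun] at htot
  have hker : finrank ℝ (LinearMap.ker ℓ) = 2 := by omega
  have hspan : finrank ℝ (Submodule.span ℝ {a, b} : Submodule ℝ R3) = 2 := by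
    have := finrank_span_eq_card h
    rwa [Matrix.range_cons_cons_empty, Fintype.card_fin] at this
  have heq : Submodule.span ℝ {a, b} = LinearMap.ker ℓ :=
    Submodule.eq_of_le_of_finrank_le hle (by rw [hker, hspan])
  constructor
  · intro hw
    rw [heq]
    exact hw
  · exact span_dot_cross

section Deriv
variable {U : Set R3} {v₁ v₂ : R3 → R3} {X : R4 → R3}

lemma pT_eq (hXdef : ∀ (p : R3) (t : ℝ), X (p, t) = Real.cos t • v₁ p + Real.sin t • v₂ p)
    (p : R3) (t : ℝ) :
    pT X (p, t) = (-Real.sin t) • v₁ p + Real.cos t • v₂ p := by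
  have hfun : (fun s => X (p, s)) = fun s => Real.cos s • v₁ p + Real.sin s • v₂ p := by
    funext s; exact hXdef p s
  have hd : HasDerivAt (fun s => Real.cos s • v₁ p + Real.sin s • v₂ p)
      ((-Real.sin t) • v₁ p + Real.cos t • v₂ p) t :=
    ((Real.hasDerivAt_cos t).smul_const (v₁ p)).add ((Real.hasDerivAt_sin t).smul_const (v₂ p))
  show deriv (fun s => X (p, s)) t = _
  rw [hfun]
  exact hd.deriv

/-- The full derivative of `X` at `(p,t)` for `p ∈ U`. -/
lemma hasFDerivAt_X (hU : IsOpen U) (h1 : ContDiffOn ℝ (⊤ : ℕ∞) v₁ U) (h2 : ContDiffOn ℝ (⊤ : ℕ∞) v₂ U)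
    (hXdef : ∀ (p : R3) (t : ℝ), X (p, t) = Real.cos t • v₁ p + Real.sin t • v₂ p)
    {p : R3} (hp : p ∈ U) (t : ℝ) :
    HasFDerivAt X
      ((Real.cos t • ((fderiv ℝ v₁ p).comp (ContinuousLinearMap.fst ℝ R3 ℝ))
        + ((-Real.sin t) • ContinuousLinearMap.snd ℝ R3 ℝ).smulRight (v₁ p))
       + (Real.sin t • ((fderiv ℝ v₂ p).comp (ContinuousLinearMap.fst ℝ R3 ℝ))
        + (Real.cos t • ContinuousLinearMap.snd ℝ R3 ℝ).smulRight (v₂ p))) (p, t) := by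
  have hv₁ : HasFDerivAt v₁ (fderiv ℝ v₁ p) p :=
    ((h1.contDiffAt (hU.mem_nhds hp)).differentiableAt (by simp)).hasFDerivAt
  have hv₂ : HasFDerivAt v₂ (fderiv ℝ v₂ p) p :=
    ((h2.contDiffAt (hU.mem_nhds hp)).differentiableAt (by simp)).hasFDerivAt
  have hv₁c : HasFDerivAt (fun y : R4 => v₁ y.1)
      ((fderiv ℝ v₁ p).comp (ContinuousLinearMap.fst ℝ R3 ℝ)) (p, t) :=
    hv₁.comp (p, t) hasFDerivAt_fst
  have hv₂c : HasFDerivAt (fun y : R4 => v₂ y.1)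
      ((fderiv ℝ v₂ p).comp (ContinuousLinearMap.fst ℝ R3 ℝ)) (p, t) :=
    hv₂.comp (p, t) hasFDerivAt_fst
  have hcos : HasFDerivAt (fun y : R4 => Real.cos y.2)
      ((-Real.sin t) • ContinuousLinearMap.snd ℝ R3 ℝ) (p, t) :=
    (Real.hasDerivAt_cos t).comp_hasFDerivAt (f := fun y : R4 => y.2) (p, t) hasFDerivAt_snd
  have hsin : HasFDerivAt (fun y : R4 => Real.sin y.2)
      (Real.cos t • ContinuousLinearMap.snd ℝ R3 ℝ) (p, t) :=
    (Real.hasDerivAt_sin t).comp_hasFDerivAt (f := fun y : R4 => y.2) (p, t) hasFDerivAt_snd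
  have hsum := (hcos.smul hv₁c).add (hsin.smul hv₂c)
  have hXfun : X = fun y : R4 => Real.cos y.2 • v₁ y.1 + Real.sin y.2 • v₂ y.1 := by
    funext y
    rcases y with ⟨a, b⟩
    exact hXdef a b
  rw [hXfun]
  exact hsum

lemma lieB_dtF_eq (hU : IsOpen U) (h1 : ContDiffOn ℝ (⊤ : ℕ∞) v₁ U) (h2 : ContDiffOn ℝ (⊤ : ℕ∞) v₂ U)
    (hXdef : ∀ (p : R3) (t : ℝ), X (p, t) = Real.cos t • v₁ p + Real.sin t • v₂ p)
    {p : R3} (hp : p ∈ U) (t : ℝ) :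
    lieB dtF (Xtil X) (p, t) = ((-Real.sin t) • v₁ p + Real.cos t • v₂ p, 0) := by
  have hX := hasFDerivAt_X hU h1 h2 hXdef hp t
  have hXt : HasFDerivAt (Xtil X)
      (((Real.cos t • ((fderiv ℝ v₁ p).comp (ContinuousLinearMap.fst ℝ R3 ℝ))
        + ((-Real.sin t) • ContinuousLinearMap.snd ℝ R3 ℝ).smulRight (v₁ p))
       + (Real.sin t • ((fderiv ℝ v₂ p).comp (ContinuousLinearMap.fst ℝ R3 ℝ))
        + (Real.cos t • ContinuousLinearMap.snd ℝ R3 ℝ).smulRight (v₂ p))).prod 0) (p, t) :=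
    hX.prodMk (hasFDerivAt_const 0 (p, t))
  have h0 : fderiv ℝ dtF (p, t) = 0 := by
    rw [show dtF = fun _ : R4 => ((0 : R3), (1 : ℝ)) from rfl]
    exact fderiv_const_apply _
  show fderiv ℝ (Xtil X) (p, t) (dtF (p, t)) - fderiv ℝ dtF (p, t) (Xtil X (p, t)) = _
  rw [hXt.fderiv, h0]
  show _ - (0 : R4 →L[ℝ] R4) (Xtil X (p, t)) = _
  rw [ContinuousLinearMap.zero_apply, sub_zero]
  show ((Real.cos t • ((fderiv ℝ v₁ p).comp (ContinuousLinearMap.fst ℝ R3 ℝ))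
        + ((-Real.sin t) • ContinuousLinearMap.snd ℝ R3 ℝ).smulRight (v₁ p)
       + (Real.sin t • ((fderiv ℝ v₂ p).comp (ContinuousLinearMap.fst ℝ R3 ℝ))
        + (Real.cos t • ContinuousLinearMap.snd ℝ R3 ℝ).smulRight (v₂ p))).prod 0) ((0 : R3), (1 : ℝ)) = _
  ext i
  · simp
  · simp

lemma memE_iff (hU : IsOpen U) (h1 : ContDiffOn ℝ (⊤ : ℕ∞) v₁ U) (h2 : ContDiffOn ℝ (⊤ : ℕ∞) v₂ U)
    (hXdef : ∀ (p : R3) (t : ℝ), X (p, t) = Real.cos t • v₁ p + Real.sin t • v₂ p)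
    {p : R3} (hp : p ∈ U) (t : ℝ) (w : R3) (a : ℝ) :
    ((w, a) : R4) ∈ Epf X (p, t) ↔ w ∈ Submodule.span ℝ {v₁ p, v₂ p} := by
  have hlie := lieB_dtF_eq hU h1 h2 hXdef hp t
  have hXq : X (p, t) = Real.cos t • v₁ p + Real.sin t • v₂ p := hXdef p t
  have hXmem : X (p, t) ∈ Submodule.span ℝ {v₁ p, v₂ p} :=
    Submodule.mem_span_pair.2 ⟨Real.cos t, Real.sin t, hXq.symm⟩
  have hYmem : (-Real.sin t) • v₁ p + Real.cos t • v₂ p ∈ Submodule.span ℝ {v₁ p, v₂ p} :=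
    Submodule.mem_span_pair.2 ⟨-Real.sin t, Real.cos t, rfl⟩
  constructor
  · intro hmem
    rcases Submodule.mem_span_insert.1 hmem with ⟨r, z, hz, hwa⟩
    rcases Submodule.mem_span_pair.1 hz with ⟨d, e, rfl⟩
    rw [hlie] at hwa
    have hw : w = d • X (p, t) + e • ((-Real.sin t) • v₁ p + Real.cos t • v₂ p) := by
      have h := congrArg Prod.fst hwa
      simpa [dtF, Xtil] using h
    rw [hw]
    exact Submodule.add_mem _ (Submodule.smul_mem _ _ hXmem) (Submodule.smul_mem _ _ hYmem)
  · intro hw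
    rcases Submodule.mem_span_pair.1 hw with ⟨d, e, rfl⟩
    set c := Real.cos t
    set s := Real.sin t
    refine Submodule.mem_span_insert.2
      ⟨a, (d * c + e * s) • Xtil X (p, t) + (-(d * s) + e * c) • lieB dtF (Xtil X) (p, t),
        Submodule.mem_span_pair.2 ⟨_, _, rfl⟩, ?_⟩
    rw [hlie]
    simp only [Xtil, dtF]
    rw [hXq]
    have hcs : c ^ 2 + s ^ 2 = 1 := by
      simpa [c, s] using Real.cos_sq_add_sin_sq t
    apply Prod.ext
    · show (d • v₁ p + e • v₂ p)
        = a • (0 : R3) + ((d * c + e * s) • (c • v₁ p + s • v₂ p)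
            + (-(d * s) + e * c) • ((-s) • v₁ p + c • v₂ p))
      funext i
      simp only [Pi.add_apply, Pi.smul_apply, smul_eq_mul, Pi.zero_apply]
      linear_combination (-(d * v₁ p i) - e * v₂ p i) * hcs
    · show a = a * 1 + ((d * c + e * s) * 0 + (-(d * s) + e * c) * 0)
      ring

end Deriv

/-!
Statement 6: for the trivialized Cartan prolongation
`X(p,t) = cos t · v₁(p) + sin t · v₂(p)` of the plane field `ξ = span{v₁, v₂}` on an open
`U ⊆ ℝ³`, the distribution `D = span{∂t, X̃}` is Engel at `(p,t)` iff `[v₁,v₂](p) ∉ ξ(p)`,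
i.e. iff `ξ` is a contact structure at `p`.
-/
theorem statement_6
    (U : Set R3) (hU : IsOpen U)
    (v₁ v₂ : R3 → R3) (h1 : ContDiffOn ℝ (⊤ : ℕ∞) v₁ U) (h2 : ContDiffOn ℝ (⊤ : ℕ∞) v₂ U)
    (hind : ∀ p ∈ U, LinearIndependent ℝ ![v₁ p, v₂ p])
    (X : R4 → R3)
    (hXdef : ∀ (p : R3) (t : ℝ), X (p, t) = Real.cos t • v₁ p + Real.sin t • v₂ p) :
    ∀ p ∈ U, ∀ t : ℝ,
      EngelAt X (p, t) ↔ lieB v₁ v₂ p ∉ Submodule.span ℝ {v₁ p, v₂ p} := by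
  intro p hp t
  have hLIv := hind p hp
  have hv₁ : HasFDerivAt v₁ (fderiv ℝ v₁ p) p :=
    ((h1.contDiffAt (hU.mem_nhds hp)).differentiableAt (by simp)).hasFDerivAt
  have hv₂ : HasFDerivAt v₂ (fderiv ℝ v₂ p) p :=
    ((h2.contDiffAt (hU.mem_nhds hp)).differentiableAt (by simp)).hasFDerivAt
  have memE : ∀ x : R4, x.1 ∈ U → ∀ (w : R3) (a : ℝ),
      (((w, a) : R4) ∈ Epf X x ↔ w ∈ Submodule.span ℝ {v₁ x.1, v₂ x.1}) := by
    intro x hx w a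
    have h := memE_iff hU h1 h2 hXdef hx x.2 w a
    rwa [Prod.mk.eta] at h
  have hLI : LinearIndependent ℝ ![X (p, t), pT X (p, t)] := by
    rw [hXdef p t, pT_eq hXdef p t, LinearIndependent.pair_iff]
    intro α β hαβ
    have e' : (α * Real.cos t - β * Real.sin t) • v₁ p
        + (α * Real.sin t + β * Real.cos t) • v₂ p = 0 := by
      rw [← hαβ]; module
    obtain ⟨hc1, hc2⟩ := LinearIndependent.pair_iff.1 hLIv _ _ e'
    have hcs := Real.cos_sq_add_sin_sq t
    constructor
    · linear_combination Real.cos t * hc1 + Real.sin t * hc2 - α * hcs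
    · linear_combination (-Real.sin t) * hc1 + Real.cos t * hc2 - β * hcs
  constructor
  · rintro ⟨-, Z₁, Z₂, hZ₁, hZ₂, hbr⟩ hb
    apply hbr
    -- involutivity of `E` when `[v₁,v₂] ∈ ξ`
    set n : R3 → R3 := fun x => v₁ x ⨯₃ v₂ x with hn
    have hndiff : DifferentiableAt ℝ n p := by
      have d1 : DifferentiableAt ℝ v₁ p := hv₁.differentiableAt
      have d2 : DifferentiableAt ℝ v₂ p := hv₂.differentiableAt
      have c1 : ∀ i : Fin 3, DifferentiableAt ℝ (fun x => v₁ x i) p :=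
        fun i => differentiableAt_pi.1 d1 i
      have c2 : ∀ i : Fin 3, DifferentiableAt ℝ (fun x => v₂ x i) p :=
        fun i => differentiableAt_pi.1 d2 i
      apply differentiableAt_pi.2
      intro i
      fin_cases i
      · show DifferentiableAt ℝ (fun x => v₁ x 1 * v₂ x 2 - v₁ x 2 * v₂ x 1) p
        exact ((c1 1).mul (c2 2)).sub ((c1 2).mul (c2 1))
      · show DifferentiableAt ℝ (fun x => v₁ x 2 * v₂ x 0 - v₁ x 0 * v₂ x 2) p
        exact ((c1 2).mul (c2 0)).sub ((c1 0).mul (c2 2))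
      · show DifferentiableAt ℝ (fun x => v₁ x 0 * v₂ x 1 - v₁ x 1 * v₂ x 0) p
        exact ((c1 0).mul (c2 1)).sub ((c1 1).mul (c2 0))
    set N := fderiv ℝ n p with hN
    have rel : ∀ v : R3 → R3, HasFDerivAt v (fderiv ℝ v p) p →
        (∀ x : R3, n x ⬝ᵥ v x = 0) →
        ∀ u : R3, v p ⬝ᵥ N u + n p ⬝ᵥ (fderiv ℝ v p u) = 0 := by
      intro v hv hzero u
      have hdot := hasFDerivAt_dot hndiff.hasFDerivAt hv
      have h0f : (fun x => n x ⬝ᵥ v x) = fun _ => (0 : ℝ) := funext fun x => hzero x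
      have h0 : fderiv ℝ (fun x => n x ⬝ᵥ v x) p = 0 := by
        rw [h0f]; exact fderiv_const_apply 0
      have hΦ := hdot.fderiv
      rw [h0] at hΦ
      have hu := congrArg (fun L : R3 →L[ℝ] ℝ => L u) hΦ.symm
      simpa using hu
    have key : v₂ p ⬝ᵥ N (v₁ p) - v₁ p ⬝ᵥ N (v₂ p) = 0 := by
      have r1 := rel v₁ hv₁ (fun x => by
        show v₁ x ⨯₃ v₂ x ⬝ᵥ v₁ x = 0
        rw [dotProduct_comm]; simp) (v₂ p)
      have r2 := rel v₂ hv₂ (fun x => by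
        show v₁ x ⨯₃ v₂ x ⬝ᵥ v₂ x = 0
        rw [dotProduct_comm]; simp) (v₁ p)
      have hlie0 : n p ⬝ᵥ lieB v₁ v₂ p = 0 := span_dot_cross hb
      have hsub : n p ⬝ᵥ fderiv ℝ v₂ p (v₁ p) - n p ⬝ᵥ fderiv ℝ v₁ p (v₂ p) = 0 := by
        rw [← dotProduct_sub]
        exact hlie0
      linarith [r1, r2, hsub]
    have sym : ∀ u₁ u₂ : R3, u₁ ∈ Submodule.span ℝ {v₁ p, v₂ p} →
        u₂ ∈ Submodule.span ℝ {v₁ p, v₂ p} → u₂ ⬝ᵥ N u₁ = u₁ ⬝ᵥ N u₂ := by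
      intro u₁ u₂ hm1 hm2
      obtain ⟨a₁, b₁, rfl⟩ := Submodule.mem_span_pair.1 hm1
      obtain ⟨a₂, b₂, rfl⟩ := Submodule.mem_span_pair.1 hm2
      simp only [_root_.map_add, _root_.map_smul, add_dotProduct, smul_dotProduct,
        dotProduct_add, dotProduct_smul, smul_eq_mul]
      linear_combination (a₁ * b₂ - a₂ * b₁) * key
    obtain ⟨s₁, hs₁o, hqs₁, hsm₁, hsec₁⟩ := hZ₁
    obtain ⟨s₂, hs₂o, hqs₂, hsm₂, hsec₂⟩ := hZ₂
    have hd₁ : HasFDerivAt Z₁ (fderiv ℝ Z₁ (p, t)) (p, t) :=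
      ((hsm₁.contDiffAt (hs₁o.mem_nhds hqs₁)).differentiableAt (by simp)).hasFDerivAt
    have hd₂ : HasFDerivAt Z₂ (fderiv ℝ Z₂ (p, t)) (p, t) :=
      ((hsm₂.contDiffAt (hs₂o.mem_nhds hqs₂)).differentiableAt (by simp)).hasFDerivAt
    have main : ∀ (Z : R4 → R4) (sZ : Set R4), IsOpen sZ → (p, t) ∈ sZ →
        (∀ x ∈ sZ, Z x ∈ Epf X x) → HasFDerivAt Z (fderiv ℝ Z (p, t)) (p, t) →
        ∀ u : R4, (Z (p, t)).1 ⬝ᵥ N u.1 + n p ⬝ᵥ (fderiv ℝ Z (p, t) u).1 = 0 := by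
      intro Z sZ hso hqs hsec hdZ u
      have hnc : HasFDerivAt (fun x : R4 => n x.1)
          (N.comp (ContinuousLinearMap.fst ℝ R3 ℝ)) (p, t) :=
        hndiff.hasFDerivAt.comp (f := fun x : R4 => x.1) (p, t) hasFDerivAt_fst
      have hZ1 : HasFDerivAt (fun x : R4 => (Z x).1)
          ((ContinuousLinearMap.fst ℝ R3 ℝ).comp (fderiv ℝ Z (p, t))) (p, t) :=
        (ContinuousLinearMap.fst ℝ R3 ℝ).hasFDerivAt.comp (p, t) hdZ
      have hdot := hasFDerivAt_dot hnc hZ1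
      have hev : (fun x : R4 => n x.1 ⬝ᵥ (Z x).1) =ᶠ[nhds (p, t)] fun _ => (0 : ℝ) := by
        filter_upwards [(hso.inter (hU.prod isOpen_univ)).mem_nhds
          ⟨hqs, ⟨hp, trivial⟩⟩] with x hx
        have hm : (Z x).1 ∈ Submodule.span ℝ {v₁ x.1, v₂ x.1} := by
          apply (memE x hx.2.1 (Z x).1 (Z x).2).1
          rw [Prod.mk.eta]
          exact hsec x hx.1
        exact span_dot_cross hm
      have h0 : fderiv ℝ (fun x : R4 => n x.1 ⬝ᵥ (Z x).1) (p, t) = 0 := by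
        rw [hev.fderiv_eq]
        exact fderiv_const_apply 0
      have hΦ := hdot.fderiv
      rw [h0] at hΦ
      have hu := congrArg (fun L : R4 →L[ℝ] ℝ => L u) hΦ.symm
      simpa using hu
    have h₁mem : (Z₁ (p, t)).1 ∈ Submodule.span ℝ {v₁ p, v₂ p} := by
      apply (memE (p, t) hp (Z₁ (p, t)).1 (Z₁ (p, t)).2).1
      rw [Prod.mk.eta]
      exact hsec₁ _ hqs₁
    have h₂mem : (Z₂ (p, t)).1 ∈ Submodule.span ℝ {v₁ p, v₂ p} := by
      apply (memE (p, t) hp (Z₂ (p, t)).1 (Z₂ (p, t)).2).1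
      rw [Prod.mk.eta]
      exact hsec₂ _ hqs₂
    have e₁ := main Z₁ s₁ hs₁o hqs₁ hsec₁ hd₁ (Z₂ (p, t))
    have e₂ := main Z₂ s₂ hs₂o hqs₂ hsec₂ hd₂ (Z₁ (p, t))
    have hsym := sym _ _ h₁mem h₂mem
    have hdot0 : n p ⬝ᵥ (lieB Z₁ Z₂ (p, t)).1 = 0 := by
      show n p ⬝ᵥ (fderiv ℝ Z₂ (p, t) (Z₁ (p, t)) - fderiv ℝ Z₁ (p, t) (Z₂ (p, t))).1 = 0
      rw [Prod.fst_sub, dotProduct_sub]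
      linarith [e₁, e₂, hsym]
    have hm := (dot_cross_eq_zero_iff hLIv _).1 hdot0
    have hfin := (memE (p, t) hp (lieB Z₁ Z₂ (p, t)).1 (lieB Z₁ Z₂ (p, t)).2).2 hm
    rwa [Prod.mk.eta] at hfin
  · intro hb
    refine ⟨hLI, fun x => (v₁ x.1, 0), fun x => (v₂ x.1, 0), ?_, ?_, ?_⟩
    · refine ⟨U ×ˢ univ, hU.prod isOpen_univ, ⟨hp, trivial⟩,
        (h1.comp contDiff_fst.contDiffOn fun x hx => hx.1).prodMk contDiffOn_const,
        fun x hx => ?_⟩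
      exact (memE x hx.1 (v₁ x.1) 0).2 (Submodule.subset_span (Set.mem_insert _ _))
    · refine ⟨U ×ˢ univ, hU.prod isOpen_univ, ⟨hp, trivial⟩,
        (h2.comp contDiff_fst.contDiffOn fun x hx => hx.1).prodMk contDiffOn_const,
        fun x hx => ?_⟩
      exact (memE x hx.1 (v₂ x.1) 0).2 (Submodule.subset_span (by simp))
    · have hdW₁ : HasFDerivAt (fun x : R4 => ((v₁ x.1 : R3), (0 : ℝ)))
          (((fderiv ℝ v₁ p).comp (ContinuousLinearMap.fst ℝ R3 ℝ)).prod 0) (p, t) :=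
        (hv₁.comp (p, t) hasFDerivAt_fst).prodMk (hasFDerivAt_const 0 (p, t))
      have hdW₂ : HasFDerivAt (fun x : R4 => ((v₂ x.1 : R3), (0 : ℝ)))
          (((fderiv ℝ v₂ p).comp (ContinuousLinearMap.fst ℝ R3 ℝ)).prod 0) (p, t) :=
        (hv₂.comp (p, t) hasFDerivAt_fst).prodMk (hasFDerivAt_const 0 (p, t))
      have hW : lieB (fun x : R4 => ((v₁ x.1 : R3), (0 : ℝ)))
          (fun x : R4 => ((v₂ x.1 : R3), (0 : ℝ))) (p, t) = (lieB v₁ v₂ p, 0) := by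
        show fderiv ℝ _ (p, t) _ - fderiv ℝ _ (p, t) _ = _
        rw [hdW₁.fderiv, hdW₂.fderiv]
        apply Prod.ext
        · show fderiv ℝ v₂ p (v₁ p) - fderiv ℝ v₁ p (v₂ p) = lieB v₁ v₂ p
          rfl
        · simp
      rw [hW]
      intro hmem
      exact hb ((memE (p, t) hp _ _).1 hmem)

end
end

section
/- Let U ⊆ ℝ³ be open, let ν, v₁, v₂ be smooth vector fields on U that are linearly independent at every point, and let r > 0. On U × ℝ with coordinates (p,t), set X(p,t) = ν(p) + r·cos(t)·v₁(p) + r·sin(t)·v₂(p) and let D = span{∂t, X̃} be the associated 2-plane field (the trivialized Lorentz prolongation). Then D is Engel at every point of U × ℝ; indeed the vectors X(p,t), ∂ₜX(p,t), ∂ₜ²X(p,t) are linearly independent in ℝ³ at every (p,t). -/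
/-!
Shared Engel infrastructure (see below for the statement).
and the 2-plane field `D = span{∂t, X̃}`:
(i) the bracket of any two smooth local sections of `D` at a point `(p,t)` lies in
    `span{∂t, X̃, [∂t,X̃]}(p,t)`;
(ii) `D` is non-integrable at `(p,t)` iff `X(p,t)` and `∂ₜX(p,t)` are linearly independent.
-/

noncomputable section

open Set

/-!
Statement 7: for the trivialized Lorentz prolongation
`X(p,t) = ν(p) + r·cos t · v₁(p) + r·sin t · v₂(p)`, with `ν, v₁, v₂` pointwise linearly
independent on the open set `U ⊆ ℝ³` and `r > 0`, the distribution `D = span{∂t, X̃}` is Engel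
at every point of `U × ℝ`; indeed `X`, `∂ₜX`, `∂ₜ²X` are linearly independent everywhere.
-/
theorem statement_7
    (U : Set R3) (hU : IsOpen U)
    (ν v₁ v₂ : R3 → R3)
    (hn : ContDiffOn ℝ (⊤ : ℕ∞) ν U) (h1 : ContDiffOn ℝ (⊤ : ℕ∞) v₁ U) (h2 : ContDiffOn ℝ (⊤ : ℕ∞) v₂ U)
    (hind : ∀ p ∈ U, LinearIndependent ℝ ![ν p, v₁ p, v₂ p])
    (r : ℝ) (hr : 0 < r)
    (X : R4 → R3)
    (hXdef : ∀ (p : R3) (t : ℝ),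
      X (p, t) = ν p + (r * Real.cos t) • v₁ p + (r * Real.sin t) • v₂ p) :
    ∀ p ∈ U, ∀ t : ℝ,
      LinearIndependent ℝ ![X (p, t), pT X (p, t), pT2 X (p, t)] ∧ EngelAt X (p, t) := by
  -- derivative of `s ↦ X (p, s)`
  have hA : ∀ (p : R3) (t : ℝ), HasDerivAt (fun s => X (p, s))
      ((-(r * Real.sin t)) • v₁ p + (r * Real.cos t) • v₂ p) t := by
    intro p t
    have hfun : (fun s => X (p, s))
        = fun s => ν p + (r * Real.cos s) • v₁ p + (r * Real.sin s) • v₂ p :=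
      funext fun s => hXdef p s
    rw [hfun]
    have h1' := ((Real.hasDerivAt_cos t).const_mul r).smul_const (v₁ p)
    have h2' := ((Real.hasDerivAt_sin t).const_mul r).smul_const (v₂ p)
    have h0 := ((hasDerivAt_const t (ν p)).add h1').add h2'
    refine h0.congr_deriv ?_
    module
  have hpT' : ∀ (p : R3) (t : ℝ),
      pT X (p, t) = (-(r * Real.sin t)) • v₁ p + (r * Real.cos t) • v₂ p :=
    fun p t => (hA p t).deriv
  have hB : ∀ (p : R3) (t : ℝ), HasDerivAt (fun s => pT X (p, s))
      ((-(r * Real.cos t)) • v₁ p + (-(r * Real.sin t)) • v₂ p) t := by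
    intro p t
    have hfun : (fun s => pT X (p, s))
        = fun s => (-(r * Real.sin s)) • v₁ p + (r * Real.cos s) • v₂ p :=
      funext fun s => hpT' p s
    rw [hfun]
    have h1' := (((Real.hasDerivAt_sin t).const_mul r).neg).smul_const (v₁ p)
    have h2' := ((Real.hasDerivAt_cos t).const_mul r).smul_const (v₂ p)
    have h0 := h1'.add h2'
    refine h0.congr_deriv ?_
    module
  have hpT2' : ∀ (p : R3) (t : ℝ),
      pT2 X (p, t) = (-(r * Real.cos t)) • v₁ p + (-(r * Real.sin t)) • v₂ p :=
    fun p t => (hB p t).deriv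
  -- pointwise linear independence of the triple
  have li3 : ∀ p ∈ U, ∀ t : ℝ,
      LinearIndependent ℝ ![X (p, t), pT X (p, t), pT2 X (p, t)] := by
    intro p hp t
    rw [Fintype.linearIndependent_iff]
    intro g hg
    have hsum : g 0 • X (p, t) + g 1 • pT X (p, t) + g 2 • pT2 X (p, t) = 0 := by
      simpa [Fin.sum_univ_three] using hg
    rw [hXdef p t, hpT' p t, hpT2' p t] at hsum
    have hsum' : (g 0) • ν p
        + (g 0 * (r * Real.cos t) - g 1 * (r * Real.sin t) - g 2 * (r * Real.cos t)) • v₁ p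
        + (g 0 * (r * Real.sin t) + g 1 * (r * Real.cos t) - g 2 * (r * Real.sin t)) • v₂ p
        = 0 := by
      rw [← hsum]; module
    have H := Fintype.linearIndependent_iff.mp (hind p hp)
      ![g 0, g 0 * (r * Real.cos t) - g 1 * (r * Real.sin t) - g 2 * (r * Real.cos t),
        g 0 * (r * Real.sin t) + g 1 * (r * Real.cos t) - g 2 * (r * Real.sin t)]
      (by simpa [Fin.sum_univ_three] using hsum')
    have hg0 : g 0 = 0 := by simpa using H 0
    have e1 : g 0 * (r * Real.cos t) - g 1 * (r * Real.sin t) - g 2 * (r * Real.cos t) = 0 := by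
      simpa using H 1
    have e2 : g 0 * (r * Real.sin t) + g 1 * (r * Real.cos t) - g 2 * (r * Real.sin t) = 0 := by
      simpa using H 2
    have pyth := Real.sin_sq_add_cos_sq t
    have hr2 : r ^ 2 ≠ 0 := pow_ne_zero 2 hr.ne'
    have hg1 : g 1 = 0 := by
      have h : g 1 * r ^ 2 = 0 := by
        linear_combination (-(r * Real.sin t)) * e1 + (r * Real.cos t) * e2
          - (g 1 * r ^ 2) * pyth
      exact (mul_eq_zero.mp h).resolve_right hr2
    have hg2 : g 2 = 0 := by
      have h : g 2 * r ^ 2 = 0 := by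
        linear_combination (-(r * Real.cos t)) * e1 + (-(r * Real.sin t)) * e2
          - ((g 2 - g 0) * r ^ 2) * pyth + r ^ 2 * hg0
      exact (mul_eq_zero.mp h).resolve_right hr2
    intro i
    fin_cases i
    · exact hg0
    · exact hg1
    · exact hg2
  -- bracket of `∂t` with a lifted field
  have hlie : ∀ (F : R4 → R3) (x : R4), DifferentiableAt ℝ F x →
      lieB dtF (fun q => (F q, (0 : ℝ))) x = (deriv (fun s => F (x.1, s)) x.2, 0) := by
    intro F x hF
    have hprod : HasFDerivAt (fun q => (F q, (0 : ℝ))) ((fderiv ℝ F x).prod 0) x :=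
      hF.hasFDerivAt.prodMk (hasFDerivAt_const 0 x)
    have hc : HasDerivAt (fun s : ℝ => ((x.1 : R3), s)) (((0 : R3), (1 : ℝ))) x.2 :=
      (hasDerivAt_const x.2 x.1).prodMk (hasDerivAt_id x.2)
    have hcomp : HasDerivAt (fun s => F (x.1, s)) (fderiv ℝ F x ((0 : R3), (1 : ℝ))) x.2 :=
      hF.hasFDerivAt.comp_hasDerivAt x.2 hc
    have hdt : fderiv ℝ dtF x = 0 := fderiv_const_apply _
    show fderiv ℝ (fun q => (F q, (0 : ℝ))) x (dtF x) - fderiv ℝ dtF x ((F x, 0)) = _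
    rw [hprod.fderiv, hdt, hcomp.deriv]
    simp [dtF]
  -- formulas for X and pT X as functions
  have hXform : X = fun q : R4 =>
      ν q.1 + (r * Real.cos q.2) • v₁ q.1 + (r * Real.sin q.2) • v₂ q.1 := by
    funext q; exact hXdef q.1 q.2
  have hpTform : pT X = fun q : R4 =>
      (-(r * Real.sin q.2)) • v₁ q.1 + (r * Real.cos q.2) • v₂ q.1 := by
    funext q; exact hpT' q.1 q.2
  -- differentiability over U
  have hdiff : ∀ x : R4, x.1 ∈ U →
      DifferentiableAt ℝ X x ∧ DifferentiableAt ℝ (pT X) x := by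
    intro x hx
    have dν : DifferentiableAt ℝ ν x.1 :=
      (hn.contDiffAt (hU.mem_nhds hx)).differentiableAt (by simp)
    have d1 : DifferentiableAt ℝ v₁ x.1 :=
      (h1.contDiffAt (hU.mem_nhds hx)).differentiableAt (by simp)
    have d2 : DifferentiableAt ℝ v₂ x.1 :=
      (h2.contDiffAt (hU.mem_nhds hx)).differentiableAt (by simp)
    have dν' : DifferentiableAt ℝ (fun q : R4 => ν q.1) x := dν.comp x differentiableAt_fst
    have d1' : DifferentiableAt ℝ (fun q : R4 => v₁ q.1) x := d1.comp x differentiableAt_fst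
    have d2' : DifferentiableAt ℝ (fun q : R4 => v₂ q.1) x := d2.comp x differentiableAt_fst
    have dcos : DifferentiableAt ℝ (fun q : R4 => r * Real.cos q.2) x :=
      ((Real.differentiable_cos.comp differentiable_snd).const_mul r).differentiableAt
    have dsin : DifferentiableAt ℝ (fun q : R4 => r * Real.sin q.2) x :=
      ((Real.differentiable_sin.comp differentiable_snd).const_mul r).differentiableAt
    constructor
    · rw [hXform]; exact (dν'.add (dcos.smul d1')).add (dsin.smul d2')
    · rw [hpTform]; exact ((dsin.neg).smul d1').add (dcos.smul d2')
  intro p hp t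
  have hp' : ((p, t) : R4).1 ∈ U := hp
  have hXd := (hdiff (p, t) hp').1
  have hpTd := (hdiff (p, t) hp').2
  have hlieX : ∀ x : R4, x.1 ∈ U → lieB dtF (Xtil X) x = (pT X x, 0) := by
    intro x hx
    have := hlie X x (hdiff x hx).1
    exact this
  refine ⟨li3 p hp t, ?_, ?_⟩
  · -- LinearIndependent ![X, pT X]
    have h := (li3 p hp t).comp ![0, 1] (by decide)
    have heq : ![X (p, t), pT X (p, t)]
        = ![X (p, t), pT X (p, t), pT2 X (p, t)] ∘ ![0, 1] := by
      funext i; fin_cases i <;> rfl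
    rw [heq]; exact h
  · -- MaxNonIntegrableAt
    refine ⟨dtF, fun q => (pT X q, (0 : ℝ)), ?_, ?_, ?_⟩
    · exact ⟨univ, isOpen_univ, trivial, contDiffOn_const,
        fun x _ => Submodule.subset_span (Set.mem_insert _ _)⟩
    · refine ⟨U ×ˢ univ, hU.prod isOpen_univ, ⟨hp, trivial⟩, ?_, ?_⟩
      · simp only [hpTform]
        refine ContDiffOn.prodMk ?_ contDiffOn_const
        refine ContDiffOn.add (ContDiffOn.fun_smul ?_ ?_) (ContDiffOn.fun_smul ?_ ?_)
        · exact (((contDiff_const.mul (Real.contDiff_sin.comp contDiff_snd)).neg).contDiffOn)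
        · exact h1.comp contDiff_fst.contDiffOn (fun x hx => hx.1)
        · exact ((contDiff_const.mul (Real.contDiff_cos.comp contDiff_snd)).contDiffOn)
        · exact h2.comp contDiff_fst.contDiffOn (fun x hx => hx.1)
      · intro x hx
        show (pT X x, (0 : ℝ)) ∈ Epf X x
        rw [← hlieX x hx.1]
        exact Submodule.subset_span (by simp)
    · -- bracket escapes Epf
      have hbr : lieB dtF (fun q => (pT X q, (0 : ℝ))) (p, t) = (pT2 X (p, t), 0) := by
        simpa [pT2] using hlie (pT X) (p, t) hpTd
      rw [hbr]
      intro hmem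
      rw [Epf, hlieX (p, t) hp'] at hmem
      rcases Submodule.mem_span_insert.mp hmem with ⟨a, z, hz, hrep⟩
      rcases Submodule.mem_span_insert.mp hz with ⟨b, w, hw, hrep2⟩
      rcases Submodule.mem_span_singleton.mp hw with ⟨c, hc⟩
      rw [hrep2, ← hc] at hrep
      have h1c : pT2 X (p, t) = b • X (p, t) + c • pT X (p, t) := by
        have := congrArg Prod.fst hrep
        simpa [dtF, Xtil, Prod.smul_fst, Prod.fst_add] using this
      have hsum0 : (-b) • X (p, t) + (-c) • pT X (p, t) + (1 : ℝ) • pT2 X (p, t) = 0 := by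
        rw [h1c]; module
      have hfin := Fintype.linearIndependent_iff.mp (li3 p hp t) ![-b, -c, 1]
        (by simpa [Fin.sum_univ_three] using hsum0) 2
      exact one_ne_zero hfin

end
end
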